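/- Let P be a finite-dimensional soluble primitive left Leibniz algebra that is not a Lie algebra. Then its socle equals its left centre: soc(P) = lcent(P). -/

import Mathlib

/-- Derived series: `A⁽⁰⁾ = A`, `A⁽ⁿ⁺¹⁾ = (A⁽ⁿ⁾)²`. -/
def derSeries {F A : Type*} [Field F] [AddCommGroup A] [Module F A]
    (mul : A →ₗ[F] A →ₗ[F] A) : ℕ → Submodule F A
  | 0 => ⊤
  | k + 1 => Submodule.span F
      {x : A | ∃ a ∈ derSeries mul k, ∃ b ∈ derSeries mul k, x = mul a b}

/-- `I` is a two-sided ideal. -/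
def IsIdeal {F A : Type*} [Field F] [AddCommGroup A] [Module F A]
    (mul : A →ₗ[F] A →ₗ[F] A) (I : Submodule F A) : Prop :=
  ∀ a : A, ∀ x ∈ I, mul a x ∈ I ∧ mul x a ∈ I

/-- `I` is a minimal ideal. -/
def IsMinIdeal {F A : Type*} [Field F] [AddCommGroup A] [Module F A]
    (mul : A →ₗ[F] A →ₗ[F] A) (I : Submodule F A) : Prop :=
  IsIdeal mul I ∧ I ≠ ⊥ ∧ ∀ J : Submodule F A, IsIdeal mul J → J ≤ I → J = ⊥ ∨ J = I

/-!
Primitivity forces every nonzero ideal to contain the self-centralising minimal ideal `C`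
(an ideal meeting `C` trivially centralises `C`, hence lies in `C`), so `C` is the only minimal
ideal and is the socle. In a left Leibniz algebra the left centre is an ideal containing every
square `aa`, since `a(ax) = (aa)x + a(ax)`; it is therefore nonzero and contains `C`. Conversely
the left centre annihilates `C` on both sides (`C` lies in it), so it lies in the centraliser `C`.
-/

section

variable {F A : Type*} [Field F] [AddCommGroup A] [Module F A] {mul : A →ₗ[F] A →ₗ[F] A}

theorem IsIdeal.inf {I J : Submodule F A} (hI : IsIdeal mul I) (hJ : IsIdeal mul J) :
    IsIdeal mul (I ⊓ J) :=
  fun a x hx => ⟨⟨(hI a x hx.1).1, (hJ a x hx.2).1⟩, ⟨(hI a x hx.1).2, (hJ a x hx.2).2⟩⟩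

theorem IsIdeal.mul_eq_zero_of_inf_eq_bot {I J : Submodule F A} (hI : IsIdeal mul I)
    (hJ : IsIdeal mul J) (hIJ : I ⊓ J = ⊥) {x y : A} (hx : x ∈ I) (hy : y ∈ J) :
    mul x y = 0 := by
  have hxy : mul x y ∈ I ⊓ J := ⟨(hI y x hx).2, (hJ x y hy).1⟩
  rwa [hIJ, Submodule.mem_bot] at hxy

theorem le_of_isIdeal_of_centraliser_eq {C I : Submodule F A} (hC : IsMinIdeal mul C)
    (hcent : {x : A | ∀ c ∈ C, mul x c = 0 ∧ mul c x = 0} = (C : Set A))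
    (hI : IsIdeal mul I) (hne : I ≠ ⊥) : C ≤ I := by
  rcases hC.2.2 (I ⊓ C) (hI.inf hC.1) inf_le_right with hbot | hIC
  · refine absurd (eq_bot_iff.2 fun x hx => ?_) hne
    have hxC : x ∈ C := by
      rw [← SetLike.mem_coe, ← hcent]
      exact fun c hc => ⟨hI.mul_eq_zero_of_inf_eq_bot hC.1 hbot hx hc,
        hC.1.mul_eq_zero_of_inf_eq_bot hI (inf_comm I C ▸ hbot) hc hx⟩
    have hxIC : x ∈ I ⊓ C := ⟨hx, hxC⟩
    rwa [hbot] at hxIC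
  · exact hIC ▸ inf_le_left

theorem setOf_isMinIdeal_eq_singleton {C : Submodule F A} (hC : IsMinIdeal mul C)
    (hcent : {x : A | ∀ c ∈ C, mul x c = 0 ∧ mul c x = 0} = (C : Set A)) :
    {I : Submodule F A | IsMinIdeal mul I} = {C} := by
  ext I
  refine ⟨fun hI => ?_, fun hI => hI ▸ hC⟩
  rcases hI.2.2 C hC.1 (le_of_isIdeal_of_centraliser_eq hC hcent hI.1 hI.2.1) with hbot | hCI
  · exact absurd hbot hC.2.1
  · exact hCI.symm

theorem ker_le_of_centraliser_eq {C : Submodule F A}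
    (hcent : {x : A | ∀ c ∈ C, mul x c = 0 ∧ mul c x = 0} = (C : Set A))
    (hCker : C ≤ LinearMap.ker mul) : LinearMap.ker mul ≤ C := by
  intro z hz
  rw [← SetLike.mem_coe, ← hcent]
  exact fun c hc => ⟨LinearMap.congr_fun hz c, LinearMap.congr_fun (hCker hc) z⟩

variable (leibniz : ∀ a b c : A, mul a (mul b c) = mul (mul a b) c + mul b (mul a c))
include leibniz

theorem mul_self_mul_eq_zero (a x : A) : mul (mul a a) x = 0 :=
  right_eq_add.mp (leibniz a a x)

theorem isIdeal_ker : IsIdeal mul (LinearMap.ker mul) := by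
  intro a x hx
  have hx' : ∀ y, mul x y = 0 := LinearMap.congr_fun hx
  refine ⟨LinearMap.ext fun y => ?_, by simp [hx' a]⟩
  simpa [hx'] using (leibniz a x y).symm

theorem ker_ne_bot (hnotLie : ∃ a : A, mul a a ≠ 0) : LinearMap.ker mul ≠ ⊥ := by
  obtain ⟨a, ha⟩ := hnotLie
  refine fun hbot => ha ?_
  have hmem : mul a a ∈ LinearMap.ker mul := LinearMap.ext (mul_self_mul_eq_zero leibniz a)
  rwa [hbot, Submodule.mem_bot] at hmem

end

theorem socle_eq_leftCentre_general {F A : Type*} [Field F] [AddCommGroup A] [Module F A]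
    (mul : A →ₗ[F] A →ₗ[F] A)
    (leibniz : ∀ a b c : A, mul a (mul b c) = mul (mul a b) c + mul b (mul a c))
    -- primitivity: a minimal ideal `C` which is its own centraliser
    (C : Submodule F A) (hC : IsMinIdeal mul C)
    (hcent : {x : A | ∀ c ∈ C, mul x c = 0 ∧ mul c x = 0} = (C : Set A))
    -- not a Lie algebra
    (hnotLie : ∃ a : A, mul a a ≠ 0) :
    -- the socle (sup of the minimal ideals) equals the left centre
    ((sSup {I : Submodule F A | IsMinIdeal mul I} : Submodule F A) : Set A)
      = {z : A | ∀ x : A, mul z x = 0} := by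
  have hCker : C ≤ LinearMap.ker mul :=
    le_of_isIdeal_of_centraliser_eq hC hcent (isIdeal_ker leibniz) (ker_ne_bot leibniz hnotLie)
  rw [setOf_isMinIdeal_eq_singleton hC hcent, sSup_singleton,
    ← le_antisymm (ker_le_of_centraliser_eq hcent hCker) hCker]
  ext z
  simp [LinearMap.ext_iff]

/-- for a finite-dimensional soluble primitive left Leibniz algebra that is
not a Lie algebra, the socle equals the left centre. -/
theorem socle_eq_leftCentre {F A : Type*} [Field F] [AddCommGroup A] [Module F A]
    [FiniteDimensional F A]
    (mul : A →ₗ[F] A →ₗ[F] A)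
    (leibniz : ∀ a b c : A, mul a (mul b c) = mul (mul a b) c + mul b (mul a c))
    (hsol : ∃ k, derSeries mul k = ⊥)
    -- primitivity: a minimal ideal `C` which is its own centraliser
    (C : Submodule F A) (hC : IsMinIdeal mul C)
    (hcent : {x : A | ∀ c ∈ C, mul x c = 0 ∧ mul c x = 0} = (C : Set A))
    -- not a Lie algebra
    (hnotLie : ∃ a : A, mul a a ≠ 0) :
    -- the socle (sup of the minimal ideals) equals the left centre
    ((sSup {I : Submodule F A | IsMinIdeal mul I} : Submodule F A) : Set A)
      = {z : A | ∀ x : A, mul z x = 0} :=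
  socle_eq_leftCentre_general mul leibniz C hC hcent hnotLie
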